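/- Let G be the group presented by generators a, b, c with relations a² = b² = c² = 1, (abc)² = 1, (ab)³ = (ac)³ = 1. Then G is isomorphic to (C₃ × C₃) ⋊ C₂, where the generator of C₂ acts on C₃ × C₃ by inversion. -/
import Mathlib

namespace Stmt2

private def a : FreeGroup (Fin 3) := FreeGroup.of 0
private def b : FreeGroup (Fin 3) := FreeGroup.of 1
private def c : FreeGroup (Fin 3) := FreeGroup.of 2

/-- Relators: `a² = b² = c² = 1`, `(abc)² = 1`, `(ab)³ = (ac)³ = 1`. -/
def rels : Set (FreeGroup (Fin 3)) :=
  {a ^ 2, b ^ 2, c ^ 2, (a * b * c) ^ 2, (a * b) ^ 3, (a * c) ^ 3}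

/-- Cyclic groups of order 3 and 2, written multiplicatively. -/
abbrev C3 := Multiplicative (ZMod 3)
abbrev C2 := Multiplicative (ZMod 2)

/-! ### Auxiliary constructions -/

private def zmodHom {G : Type*} [Monoid G] (n : ℕ) [NeZero n] (u : G) (hu : u ^ n = 1) :
    Multiplicative (ZMod n) →* G where
  toFun m := u ^ (Multiplicative.toAdd m).val
  map_one' := by
    show u ^ (ZMod.val (0 : ZMod n)) = 1
    simp [ZMod.val_zero]
  map_mul' p q := by
    show u ^ ((Multiplicative.toAdd p + Multiplicative.toAdd q).val) = _
    rw [ZMod.val_add, ← pow_eq_pow_mod _ hu, pow_add]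

private lemma zmodHom_apply {G : Type*} [Monoid G] (n : ℕ) [NeZero n] (u : G) (hu : u ^ n = 1)
    (m : Multiplicative (ZMod n)) : zmodHom n u hu m = u ^ (Multiplicative.toAdd m).val := rfl

private def invAut : MulAut (C3 × C3) := MulEquiv.inv (C3 × C3)

private lemma invAut_sq : invAut ^ 2 = 1 := by
  rw [sq]
  refine MulEquiv.ext fun m => ?_
  simp [MulAut.mul_apply, MulAut.one_apply, invAut]

private def phi : C2 →* MulAut (C3 × C3) := zmodHom 2 invAut invAut_sq

private lemma phi_one_apply (m : C3 × C3) : phi (Multiplicative.ofAdd (1 : ZMod 2)) m = m⁻¹ := by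
  show (invAut ^ (ZMod.val (1 : ZMod 2))) m = m⁻¹
  norm_num [ZMod.val_one, invAut]

private abbrev M := (C3 × C3) ⋊[phi] C2

private def g3 : C3 := Multiplicative.ofAdd 1
private def tt : C2 := Multiplicative.ofAdd 1

private lemma phi_tt (m : C3 × C3) : phi tt m = m⁻¹ := phi_one_apply m

private lemma g3_pow_val (q : C3) : g3 ^ (Multiplicative.toAdd q).val = q := by
  rw [g3, ← ofAdd_nsmul, nsmul_eq_mul, mul_one, ZMod.natCast_zmod_val, ofAdd_toAdd]

private lemma tt_pow_val (h : C2) : tt ^ (Multiplicative.toAdd h).val = h := by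
  rw [tt, ← ofAdd_nsmul, nsmul_eq_mul, mul_one, ZMod.natCast_zmod_val, ofAdd_toAdd]

/-! ### The forward homomorphism -/

private def fgen : Fin 3 → M := ![⟨1, tt⟩, ⟨(g3, 1), tt⟩, ⟨(1, g3), tt⟩]

private lemma mulM (n n' : C3 × C3) (h h' : C2) :
    (⟨n, h⟩ * ⟨n', h'⟩ : M) = ⟨n * phi h n', h * h'⟩ := rfl

private lemma hrels : ∀ r ∈ rels, FreeGroup.lift fgen r = 1 := by
  intro r hr
  have htt : ∀ n : C3 × C3, phi tt n = n⁻¹ := phi_tt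
  simp only [rels, Set.mem_insert_iff, Set.mem_singleton_iff] at hr
  rcases hr with rfl | rfl | rfl | rfl | rfl | rfl <;>
    simp only [a, b, c, map_pow, map_mul, FreeGroup.lift_apply_of] <;>
    refine SemidirectProduct.ext ?_ ?_ <;>
      simp [fgen, pow_succ, mulM, htt, g3, tt] <;> decide

private abbrev P := PresentedGroup rels

private def theta : P →* M := PresentedGroup.toGroup hrels

/-! ### Relations in the presented group -/

private def X : P := PresentedGroup.of 0
private def Y : P := PresentedGroup.of 1
private def Z : P := PresentedGroup.of 2

private lemma relmk : ∀ r ∈ rels, PresentedGroup.mk rels r = 1 := fun r hr =>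
  (QuotientGroup.eq_one_iff r).2 (Subgroup.subset_normalClosure hr)

private lemma hX2 : X * X = 1 := by
  have h := relmk (a ^ 2) (by simp [rels])
  rw [map_pow, pow_two] at h; exact h

private lemma hY2 : Y * Y = 1 := by
  have h := relmk (b ^ 2) (by simp [rels])
  rw [map_pow, pow_two] at h; exact h

private lemma hZ2 : Z * Z = 1 := by
  have h := relmk (c ^ 2) (by simp [rels])
  rw [map_pow, pow_two] at h; exact h

private lemma hW2 : (X * Y * Z) * (X * Y * Z) = 1 := by
  have h := relmk ((a * b * c) ^ 2) (by simp [rels])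
  rw [map_pow, map_mul, map_mul, pow_two] at h; exact h

private lemma hU3 : (X * Y) ^ 3 = 1 := by
  have h := relmk ((a * b) ^ 3) (by simp [rels])
  rw [map_pow, map_mul] at h; exact h

private lemma hV3 : (X * Z) ^ 3 = 1 := by
  have h := relmk ((a * c) ^ 3) (by simp [rels])
  rw [map_pow, map_mul] at h; exact h

private lemma hU3' : (X * Y) * ((X * Y) * (X * Y)) = 1 := by
  rw [← pow_three]; exact hU3

private lemma hV3' : (X * Z) * ((X * Z) * (X * Z)) = 1 := by
  rw [← pow_three]; exact hV3

private lemma hXinv : X⁻¹ = X := inv_eq_of_mul_eq_one_right hX2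
private lemma hYinv : Y⁻¹ = Y := inv_eq_of_mul_eq_one_right hY2
private lemma hZinv : Z⁻¹ = Z := inv_eq_of_mul_eq_one_right hZ2

/-- The key commutation lemma. -/
private lemma key_comm_abstract {G : Type*} [Group G] (x y z : G)
    (hx : x * x = 1) (hy : y * y = 1) (hz : z * z = 1)
    (hw : (x * y * z) * (x * y * z) = 1)
    (hu : (x * y) * ((x * y) * (x * y)) = 1) :
    (x * y) * (x * z) = (x * z) * (x * y) := by
  obtain ⟨s, hs⟩ : ∃ s, s = y * x := ⟨_, rfl⟩
  obtain ⟨w, hwd⟩ : ∃ w, w = x * y * z := ⟨_, rfl⟩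
  have hww : w * w = 1 := by rw [hwd]; exact hw
  have hs3 : s * (s * s) = 1 := by
    have h : s * (s * s) = y * ((x * y) * ((x * y) * (x * y))) * y⁻¹ := by rw [hs]; group
    rw [hu] at h; simpa using h
  have hzsw : z = s * w := by
    have h : s * w = y * (x * x) * (y * z) := by rw [hs, hwd]; group
    rw [hx] at h
    have h2 : y * (1 : G) * (y * z) = y * y * z := by group
    rw [h2, hy, one_mul] at h
    exact h.symm
  have hsw2 : (s * w) * (s * w) = 1 := by rw [← hzsw]; exact hz
  have hwinv : w⁻¹ = w := inv_eq_of_mul_eq_one_right hww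
  have hsinv : s⁻¹ = s * s := inv_eq_of_mul_eq_one_right hs3
  have hwsw : w * (s * w) = s⁻¹ := by
    refine eq_inv_of_mul_eq_one_right ?_
    rw [show s * (w * (s * w)) = (s * w) * (s * w) by group]
    exact hsw2
  have hA : y * (x * z) = s * (s * w) := by rw [hzsw, hs]; group
  have keyA : (s * (s * w)) * (s * (s * w)) = 1 := by
    have e1 : (s * (s * w)) * (s * (s * w)) =
        s * (s * ((w * (s * w)) * (w⁻¹ * (s * w)))) := by group
    rw [e1, hwinv, hwsw, hsinv]
    rw [show s * (s * ((s * s) * (s * s))) = (s * (s * s)) * (s * (s * s)) by group, hs3, one_mul]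
  have hAA : (y * (x * z)) * (y * (x * z)) = 1 := by rw [hA]; exact keyA
  have h1 : y * (x * z) = (y * (x * z))⁻¹ := eq_inv_of_mul_eq_one_right hAA
  have hxinv : x⁻¹ = x := inv_eq_of_mul_eq_one_right hx
  have hyinv : y⁻¹ = y := inv_eq_of_mul_eq_one_right hy
  have hzinv : z⁻¹ = z := inv_eq_of_mul_eq_one_right hz
  have h2 : (y * (x * z))⁻¹ = z⁻¹ * (x⁻¹ * y⁻¹) := by group
  rw [hxinv, hyinv, hzinv] at h2
  have h3 : y * (x * z) = z * (x * y) := h1.trans h2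
  calc (x * y) * (x * z) = x * (y * (x * z)) := by group
    _ = x * (z * (x * y)) := by rw [h3]
    _ = (x * z) * (x * y) := by group

private lemma comm_UV : (X * Y) * (X * Z) = (X * Z) * (X * Y) :=
  key_comm_abstract X Y Z hX2 hY2 hZ2 hW2 hU3'

/-! ### The backward homomorphism -/

private def S : P := Y * X
private def R : P := Z * X

private lemma hSinv : (X * Y)⁻¹ = S := by rw [S, mul_inv_rev, hXinv, hYinv]
private lemma hRinv : (X * Z)⁻¹ = R := by rw [R, mul_inv_rev, hXinv, hZinv]

private lemma hS3 : S ^ 3 = 1 := by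
  rw [← hSinv, inv_pow, hU3, inv_one]

private lemma hR3 : R ^ 3 = 1 := by
  rw [← hRinv, inv_pow, hV3, inv_one]

private lemma hSR : Commute S R := by
  rw [← hSinv, ← hRinv]
  exact (show Commute (X * Y) (X * Z) from comm_UV).inv_inv

private lemma hXpow2 : X ^ 2 = 1 := by rw [pow_two]; exact hX2

private def nHom : C3 × C3 →* P where
  toFun p := (zmodHom 3 S hS3) p.1 * (zmodHom 3 R hR3) p.2
  map_one' := by simp
  map_mul' p q := by
    simp only [Prod.fst_mul, Prod.snd_mul, map_mul]
    have hc : (zmodHom 3 R hR3) p.2 * (zmodHom 3 S hS3) q.1 =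
        (zmodHom 3 S hS3) q.1 * (zmodHom 3 R hR3) p.2 :=
      ((hSR.pow_pow (Multiplicative.toAdd q.1).val (Multiplicative.toAdd p.2).val).symm).eq
    simp only [mul_assoc]
    rw [← mul_assoc ((zmodHom 3 R hR3) p.2), hc, mul_assoc]

private lemma nHom_apply (p : C3 × C3) :
    nHom p = S ^ (Multiplicative.toAdd p.1).val * R ^ (Multiplicative.toAdd p.2).val := rfl

private def xHom : C2 →* P := zmodHom 2 X hXpow2

private lemma xHom_tt : xHom tt = X := by
  show X ^ (ZMod.val (1 : ZMod 2)) = X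
  norm_num [ZMod.val_one]

private lemma conjX_S : X * S * X⁻¹ = S⁻¹ := by
  rw [S]
  have e : X * (Y * X) * X⁻¹ = X * Y := by group
  rw [e, mul_inv_rev, hXinv, hYinv]

private lemma conjX_R : X * R * X⁻¹ = R⁻¹ := by
  rw [R]
  have e : X * (Z * X) * X⁻¹ = X * Z := by group
  rw [e, mul_inv_rev, hXinv, hZinv]

private lemma hcompat : ∀ h : C2, nHom.comp (phi h).toMonoidHom =
    (MulAut.conj (xHom h)).toMonoidHom.comp nHom := by
  intro h
  rcases (by decide : ∀ v : ZMod 2, v = 0 ∨ v = 1) (Multiplicative.toAdd h) with h0 | h1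
  · have hh : h = 1 := by
      rw [← ofAdd_toAdd h, h0]; rfl
    subst hh
    ext p
    simp
  · have hh : h = tt := by
      rw [← ofAdd_toAdd h, h1]; rfl
    subst hh
    ext p
    simp only [MonoidHom.comp_apply, MulEquiv.coe_toMonoidHom, phi_tt, MulAut.conj_apply,
      xHom_tt]
    rw [map_inv, nHom_apply]
    rw [mul_inv_rev, ((hSR.pow_pow _ _).inv_inv.symm.eq :
      (R ^ (Multiplicative.toAdd p.2).val)⁻¹ * (S ^ (Multiplicative.toAdd p.1).val)⁻¹ =
      (S ^ (Multiplicative.toAdd p.1).val)⁻¹ * (R ^ (Multiplicative.toAdd p.2).val)⁻¹)]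
    rw [show X * (S ^ (Multiplicative.toAdd p.1).val * R ^ (Multiplicative.toAdd p.2).val) * X⁻¹
        = (X * S * X⁻¹) ^ (Multiplicative.toAdd p.1).val *
          (X * R * X⁻¹) ^ (Multiplicative.toAdd p.2).val by
      rw [conj_pow, conj_pow]; group]
    rw [conjX_S, conjX_R, inv_pow, inv_pow]

private def psi : M →* P := SemidirectProduct.lift nHom xHom hcompat

/-! ### The two composites -/

private lemma theta_of (i : Fin 3) : theta (PresentedGroup.of i) = fgen i :=
  PresentedGroup.toGroup.of hrels

private lemma psi_comp_theta : psi.comp theta = MonoidHom.id P := by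
  refine PresentedGroup.ext fun i => ?_
  fin_cases i <;>
    simp only [MonoidHom.comp_apply, MonoidHom.id_apply, theta_of]
  · -- i = 0
    show psi (fgen 0) = X
    have : (fgen 0 : M) = SemidirectProduct.inr tt := by
      refine SemidirectProduct.ext ?_ ?_ <;> simp [fgen]
    rw [this]
    simp [psi, xHom_tt]
  · show psi (fgen 1) = Y
    have : (fgen 1 : M) = SemidirectProduct.inl (g3, 1) * SemidirectProduct.inr tt := by
      refine SemidirectProduct.ext ?_ ?_ <;> simp [fgen]
    rw [this]
    simp only [map_mul, psi, SemidirectProduct.lift_inl, SemidirectProduct.lift_inr, xHom_tt,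
      nHom_apply]
    show S ^ (ZMod.val (1 : ZMod 3)) * R ^ (ZMod.val (0 : ZMod 3)) * X = Y
    norm_num [ZMod.val_one]
    rw [S, mul_assoc, hX2, mul_one]
  · show psi (fgen 2) = Z
    have : (fgen 2 : M) = SemidirectProduct.inl (1, g3) * SemidirectProduct.inr tt := by
      refine SemidirectProduct.ext ?_ ?_ <;> simp [fgen]
    rw [this]
    simp only [map_mul, psi, SemidirectProduct.lift_inl, SemidirectProduct.lift_inr, xHom_tt,
      nHom_apply]
    show S ^ (ZMod.val (0 : ZMod 3)) * R ^ (ZMod.val (1 : ZMod 3)) * X = Z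
    norm_num [ZMod.val_one]
    rw [R, mul_assoc, hX2, mul_one]

private lemma theta_S : theta S = SemidirectProduct.inl (g3, 1) := by
  rw [S]
  show theta (PresentedGroup.of 1 * PresentedGroup.of 0) = _
  rw [map_mul, theta_of, theta_of]
  refine SemidirectProduct.ext ?_ ?_ <;>
    simp [fgen, mulM, phi_tt, tt] <;> decide

private lemma theta_R : theta R = SemidirectProduct.inl (1, g3) := by
  rw [R]
  show theta (PresentedGroup.of 2 * PresentedGroup.of 0) = _
  rw [map_mul, theta_of, theta_of]
  refine SemidirectProduct.ext ?_ ?_ <;>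
    simp [fgen, mulM, phi_tt, tt] <;> decide

private lemma theta_comp_psi : theta.comp psi = MonoidHom.id M := by
  refine SemidirectProduct.hom_ext ?_ ?_
  · refine MonoidHom.ext fun p => ?_
    simp only [MonoidHom.comp_apply, MonoidHom.id_apply, MonoidHom.comp_apply]
    rw [show psi (SemidirectProduct.inl p) = nHom p from SemidirectProduct.lift_inl _ _ _ _]
    rw [nHom_apply, map_mul, map_pow, map_pow, theta_S, theta_R, ← map_pow, ← map_pow, ← map_mul]
    congr 1
    refine Prod.ext ?_ ?_ <;> simp [Prod.pow_fst, Prod.pow_snd, g3_pow_val]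
  · refine MonoidHom.ext fun h => ?_
    simp only [MonoidHom.comp_apply, MonoidHom.id_apply]
    rw [show psi (SemidirectProduct.inr h) = xHom h from SemidirectProduct.lift_inr _ _ _ _]
    show theta (X ^ (Multiplicative.toAdd h).val) = _
    rw [map_pow]
    have : theta X = SemidirectProduct.inr tt := by
      show theta (PresentedGroup.of 0) = _
      rw [theta_of]
      refine SemidirectProduct.ext ?_ ?_ <;> simp [fgen]
    rw [this, ← map_pow, tt_pow_val]

/-! ### Main theorem -/

theorem presented_iso_semidirect :
    ∃ φ : C2 →* MulAut (C3 × C3),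
      (∀ m : C3 × C3, φ (Multiplicative.ofAdd (1 : ZMod 2)) m = m⁻¹) ∧
      Nonempty (PresentedGroup rels ≃* (C3 × C3) ⋊[φ] C2) := by
  refine ⟨phi, phi_one_apply, ⟨MonoidHom.toMulEquiv theta psi psi_comp_theta theta_comp_psi⟩⟩

end Stmt2
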